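/- Let K be a commutative ring, v, w : ℕ → K, and A^{v,w}(n,k) defined by the recurrence A^{v,w}(n,k) = A^{v,w}(n-1,k-1) + (v_{n-1}+w_k)·A^{v,w}(n-1,k) with standard initial conditions. Then for every n and every x in K: ∏_{i=0}^{n-1}(x + v_i) = ∑_{k=0}^{n} A^{v,w}(n,k) · ∏_{i=0}^{k-1}(x − w_i). -/

import Mathlib

/-!
Expanding `(x + v_n) ∏_{i<k} (x - w_i) = ∏_{i<k+1} (x - w_i) + (v_n + w_k) ∏_{i<k} (x - w_i)`
turns the expansion of `∏_{i<n} (x + v_i)` in the basis `∏_{i<k} (x - w_i)` into that of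
`∏_{i<n+1} (x + v_i)`, and the coefficients transform exactly by the recurrence defining `A`.
-/

open Finset

/-- The generalized two-weight array `A^{v,w}(n,k)`. -/
def A {K : Type*} [CommRing K] (v w : ℕ → K) : ℕ → ℕ → K
  | 0, 0 => 1
  | 0, _ + 1 => 0
  | n + 1, 0 => (v n + w 0) * A v w n 0
  | n + 1, k + 1 => A v w n k + (v n + w (k + 1)) * A v w n (k + 1)

section

variable {K : Type*} [CommRing K]

theorem A_eq_zero_of_lt (v w : ℕ → K) : ∀ {n k : ℕ}, n < k → A v w n k = 0
  | 0, _ + 1, _ => rfl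
  | n + 1, k + 1, h => by
    rw [A, A_eq_zero_of_lt v w (Nat.lt_of_succ_lt_succ h),
      A_eq_zero_of_lt v w (by omega : n < k + 1), mul_zero, add_zero]

theorem sum_range_A_succ_mul (v w f : ℕ → K) (n : ℕ) :
    ∑ k ∈ range (n + 2), A v w (n + 1) k * f k =
      ∑ k ∈ range (n + 1), A v w n k * (f (k + 1) + (v n + w k) * f k) := by
  have hshift : ∑ k ∈ range (n + 1), A v w n k * ((v n + w k) * f k) =
      ∑ k ∈ range (n + 1), A v w n (k + 1) * ((v n + w (k + 1)) * f (k + 1)) +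
        A v w n 0 * ((v n + w 0) * f 0) := by
    rw [← sum_range_succ' (fun k => A v w n k * ((v n + w k) * f k)), sum_range_succ _ (n + 1),
      A_eq_zero_of_lt v w n.lt_succ_self, zero_mul, add_zero]
  simp only [mul_add, sum_add_distrib, hshift, sum_range_succ' _ (n + 1), A]
  rw [← add_assoc, ← sum_add_distrib]
  congr 1
  · exact sum_congr rfl fun k _ => by ring
  · ring

theorem add_mul_prod_range_sub (w : ℕ → K) (a x : K) (k : ℕ) :
    (x + a) * ∏ i ∈ range k, (x - w i) =
      ∏ i ∈ range (k + 1), (x - w i) + (a + w k) * ∏ i ∈ range k, (x - w i) := by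
  rw [prod_range_succ]
  ring

end

theorem stmt_4 {K : Type*} [CommRing K] (v w : ℕ → K) (n : ℕ) (x : K) :
    ∏ i ∈ Finset.range n, (x + v i) =
      ∑ k ∈ Finset.range (n + 1), A v w n k * ∏ i ∈ Finset.range k, (x - w i) := by
  induction n with
  | zero => simp [A]
  | succ n ih =>
    rw [prod_range_succ, ih, sum_mul, sum_range_A_succ_mul]
    refine sum_congr rfl fun k _ => ?_
    rw [mul_assoc, mul_comm _ (x + v n), add_mul_prod_range_sub]
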